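/- Let F be the Minkowskian product of Finsler metrics F₁ and F₂ with respect to a product function f. Then at every point (x,y) = ((x₁,x₂),(y₁,y₂)) with y₁ ≠ 0 and y₂ ≠ 0, the mean Berwald curvature E_{βγ} = ½·B^α_{βγα} (sum over α) of F satisfies: E_{ij}(x,y) = E₁_{ij}(x₁,y₁), E_{i'j'}(x,y) = E₂_{i'j'}(x₂,y₂), and E_{i'j}(x,y) = E_{ij'}(x,y) = 0, where E₁ and E₂ are the mean Berwald curvatures of F₁ and F₂. -/

import Mathlib

open Matrix

/-- Partial derivative in the fiber variable `y` in the direction of the `α`-th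
coordinate, for a function `g (x, y)` of a base point and a fiber vector. -/
noncomputable def pdy {ι : Type*} [Fintype ι] [DecidableEq ι]
    (g : (ι → ℝ) → (ι → ℝ) → ℝ) (α : ι) : (ι → ℝ) → (ι → ℝ) → ℝ :=
  fun x y => fderiv ℝ (g x) y (Pi.single α 1)

/-- Partial derivative in the base variable `x` in the direction of the `γ`-th
coordinate, for a function `g (x, y)` of a base point and a fiber vector. -/
noncomputable def pdx {ι : Type*} [Fintype ι] [DecidableEq ι]
    (g : (ι → ℝ) → (ι → ℝ) → ℝ) (γ : ι) : (ι → ℝ) → (ι → ℝ) → ℝ :=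
  fun x y => fderiv ℝ (fun x' => g x' y) x (Pi.single γ 1)

/-- The fundamental tensor `(G_{αβ}) = (∂²(F²)/∂y^α∂y^β)` of a Finsler metric `F`. -/
noncomputable def fundTensor {ι : Type*} [Fintype ι] [DecidableEq ι]
    (F : (ι → ℝ) → (ι → ℝ) → ℝ) (x y : ι → ℝ) : Matrix ι ι ℝ :=
  fun α β => pdy (pdy (fun x' y' => (F x' y') ^ 2) β) α x y

/-- `F` is a Finsler metric on the open set `U`: `G = F²` is smooth on the slit
domain, `F` is positive for `y ≠ 0`, absolutely 1-homogeneous in `y`, and its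
fundamental tensor is positive definite for `y ≠ 0`. -/
structure IsFinslerMetric {ι : Type*} [Fintype ι] [DecidableEq ι]
    (U : Set (ι → ℝ)) (F : (ι → ℝ) → (ι → ℝ) → ℝ) : Prop where
  isOpen : IsOpen U
  smooth : ContDiffOn ℝ (⊤ : ℕ∞) (fun p : (ι → ℝ) × (ι → ℝ) => (F p.1 p.2) ^ 2)
    (U ×ˢ {y | y ≠ 0})
  pos : ∀ x ∈ U, ∀ y : ι → ℝ, y ≠ 0 → 0 < F x y
  homog : ∀ x ∈ U, ∀ (y : ι → ℝ) (c : ℝ), F x (c • y) = |c| * F x y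
  posDef : ∀ x ∈ U, ∀ y : ι → ℝ, y ≠ 0 → (fundTensor F x y).PosDef

/-- The geodesic spray coefficients
`𝔾^α = ½ G^{αβ}(∂²G/∂y^β∂x^γ · y^γ − ∂G/∂x^β)` of a Finsler metric `F`. -/
noncomputable def spray {ι : Type*} [Fintype ι] [DecidableEq ι]
    (F : (ι → ℝ) → (ι → ℝ) → ℝ) (α : ι) : (ι → ℝ) → (ι → ℝ) → ℝ :=
  fun x y => (1 / 2) * ∑ β, (fundTensor F x y)⁻¹ α β *
    ((∑ γ, pdx (pdy (fun x' y' => (F x' y') ^ 2) β) γ x y * y γ) -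
      pdx (fun x' y' => (F x' y') ^ 2) β x y)

/-- The Cartan nonlinear connection coefficients `Γ^α_β = ∂𝔾^α/∂y^β`. -/
noncomputable def nonlinConn {ι : Type*} [Fintype ι] [DecidableEq ι]
    (F : (ι → ℝ) → (ι → ℝ) → ℝ) (α β : ι) : (ι → ℝ) → (ι → ℝ) → ℝ :=
  pdy (spray F α) β

/-- The Berwald connection coefficients `Γ̌^α_{β;γ} = ∂Γ^α_γ/∂y^β = ∂²𝔾^α/∂y^β∂y^γ`. -/
noncomputable def berwaldConn {ι : Type*} [Fintype ι] [DecidableEq ι]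
    (F : (ι → ℝ) → (ι → ℝ) → ℝ) (α β γ : ι) : (ι → ℝ) → (ι → ℝ) → ℝ :=
  pdy (nonlinConn F α γ) β

/-- The Berwald curvature `B^α_{βγη} = ∂³𝔾^α/∂y^β∂y^γ∂y^η`. -/
noncomputable def berwaldCurv {ι : Type*} [Fintype ι] [DecidableEq ι]
    (F : (ι → ℝ) → (ι → ℝ) → ℝ) (α β γ η : ι) : (ι → ℝ) → (ι → ℝ) → ℝ :=
  pdy (pdy (pdy (spray F α) η) γ) β

/-- The mean Berwald curvature `E_{βγ} = ½ B^α_{βγα}` (sum over `α`). -/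
noncomputable def meanBerwaldCurv {ι : Type*} [Fintype ι] [DecidableEq ι]
    (F : (ι → ℝ) → (ι → ℝ) → ℝ) (β γ : ι) : (ι → ℝ) → (ι → ℝ) → ℝ :=
  fun x y => (1 / 2) * ∑ α, berwaldCurv F α β γ α x y

/-- The Landsberg curvature `L_{βγη} = −¼ y^ν G_{να} B^α_{βγη}` (sums over `ν, α`). -/
noncomputable def landsbergCurv {ι : Type*} [Fintype ι] [DecidableEq ι]
    (F : (ι → ℝ) → (ι → ℝ) → ℝ) (β γ η : ι) : (ι → ℝ) → (ι → ℝ) → ℝ :=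
  fun x y => -(1 / 4) * ∑ ν, ∑ α, y ν * fundTensor F x y ν α * berwaldCurv F α β γ η x y

/-- The mean Landsberg curvature `J_α = 2 G^{βγ} L_{αβγ}` (sums over `β, γ`). -/
noncomputable def meanLandsbergCurv {ι : Type*} [Fintype ι] [DecidableEq ι]
    (F : (ι → ℝ) → (ι → ℝ) → ℝ) (α : ι) : (ι → ℝ) → (ι → ℝ) → ℝ :=
  fun x y => 2 * ∑ β, ∑ γ, (fundTensor F x y)⁻¹ β γ * landsbergCurv F α β γ x y

/-- Partial derivative of `f : ℝ → ℝ → ℝ` with respect to the first variable. -/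
noncomputable def pderivS (f : ℝ → ℝ → ℝ) (s t : ℝ) : ℝ := deriv (fun u => f u t) s

/-- Partial derivative of `f : ℝ → ℝ → ℝ` with respect to the second variable. -/
noncomputable def pderivT (f : ℝ → ℝ → ℝ) (s t : ℝ) : ℝ := deriv (fun v => f s v) t

/-- `f_st = ∂²f/∂s∂t`. -/
noncomputable def pderivST (f : ℝ → ℝ → ℝ) (s t : ℝ) : ℝ :=
  deriv (fun u => pderivT f u t) s

/-- The data of a Minkowskian product: `F₁, F₂` are Finsler metrics on `U₁, U₂`,
`f` is an admissible product function, and `F = √(f(F₁², F₂²))` is the Minkowskian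
product metric, itself assumed to be a Finsler metric on `U₁ × U₂`. -/
structure IsMinkowskianProduct {m n : ℕ}
    (U₁ : Set (Fin m → ℝ)) (U₂ : Set (Fin n → ℝ))
    (F₁ : (Fin m → ℝ) → (Fin m → ℝ) → ℝ) (F₂ : (Fin n → ℝ) → (Fin n → ℝ) → ℝ)
    (f : ℝ → ℝ → ℝ)
    (F : (Fin m ⊕ Fin n → ℝ) → (Fin m ⊕ Fin n → ℝ) → ℝ) : Prop where
  finsler₁ : IsFinslerMetric U₁ F₁
  finsler₂ : IsFinslerMetric U₂ F₂
  f_cont : ContinuousOn (fun p : ℝ × ℝ => f p.1 p.2) (Set.Ici 0 ×ˢ Set.Ici 0)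
  f_nonneg : ∀ s ∈ Set.Ici (0 : ℝ), ∀ t ∈ Set.Ici (0 : ℝ), 0 ≤ f s t
  f_zero_iff : ∀ s ∈ Set.Ici (0 : ℝ), ∀ t ∈ Set.Ici (0 : ℝ),
    (f s t = 0 ↔ s = 0 ∧ t = 0)
  f_homog : ∀ c ∈ Set.Ici (0 : ℝ), ∀ s ∈ Set.Ici (0 : ℝ), ∀ t ∈ Set.Ici (0 : ℝ),
    f (c * s) (c * t) = c * f s t
  f_smooth : ContDiffOn ℝ (⊤ : ℕ∞) (fun p : ℝ × ℝ => f p.1 p.2)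
    (Set.Ioi 0 ×ˢ Set.Ioi 0)
  fs_ne : ∀ s > (0 : ℝ), ∀ t > (0 : ℝ), pderivS f s t ≠ 0
  ft_ne : ∀ s > (0 : ℝ), ∀ t > (0 : ℝ), pderivT f s t ≠ 0
  delta_ne : ∀ s > (0 : ℝ), ∀ t > (0 : ℝ),
    pderivS f s t * pderivT f s t - 2 * f s t * pderivST f s t ≠ 0
  F_def : ∀ (x y : Fin m ⊕ Fin n → ℝ),
    F x y = Real.sqrt (f ((F₁ (x ∘ Sum.inl) (y ∘ Sum.inl)) ^ 2)
      ((F₂ (x ∘ Sum.inr) (y ∘ Sum.inr)) ^ 2))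
  finsler : IsFinslerMetric
    {x : Fin m ⊕ Fin n → ℝ | (x ∘ Sum.inl) ∈ U₁ ∧ (x ∘ Sum.inr) ∈ U₂} F

/-!
Write `G = F²`, `K = F₁²`, `H = F₂²`, with plain subscripts for `y`-derivatives and `;` for
`x`-derivatives. Where `x₁ ∈ U₁`, `x₂ ∈ U₂`, `y₁ ≠ 0` and `y₂ ≠ 0` (an open condition) we have
`G = f(K, H)`, hence `G_i = f_s K_i` and `G_{i'} = f_t H_{i'}`. The vector
`w = (2𝔾₁(x₁, y₁), 2𝔾₂(x₂, y₂))` solves the symmetric invertible system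
`G_{βα} w^α = G_{β;γ} y^γ - G_{;β}` defining `2𝔾`: row `i` differentiates `G_i = f_s(K, H) K_i`
along `w` in `y` and along `y` in `x`, and the two sides agree term by term by the spray equation
of `F₁` and the identities `K_c w^c = K_{;c} y^c`, `H_{c'} w^{c'} = H_{;c'} y^{c'}`; the mixed
partial of `f` enters both sides as `∂_t f_s`. So near the point the spray of `F` is the pullback
of the sprays of `F₁` and `F₂`: each `𝔾^i` depends on `(x₁, y₁)` only, its `y`-derivatives in
first-block directions are those of `𝔾₁^i` and the others vanish, and symmetrically for `𝔾^{i'}`.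
Contracting `B^α_{βγα}` gives the four identities.
-/

open Filter Topology

section DirectionalDerivatives

variable {ι κ : Type*}

noncomputable def dirDerivY (g : (ι → ℝ) → (ι → ℝ) → ℝ) (v : ι → ℝ) : (ι → ℝ) → (ι → ℝ) → ℝ :=
  fun x y => fderiv ℝ (g x) y v

noncomputable def dirDerivX (g : (ι → ℝ) → (ι → ℝ) → ℝ) (v : ι → ℝ) : (ι → ℝ) → (ι → ℝ) → ℝ :=
  fun x y => fderiv ℝ (fun x' => g x' y) x v

variable {g u u' : (ι → ℝ) → (ι → ℝ) → ℝ} {x y : ι → ℝ}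

@[simp] lemma dirDerivY_zero : dirDerivY g 0 = fun _ _ => 0 := by
  funext x y; simp [dirDerivY]

@[simp] lemma dirDerivX_zero : dirDerivX g 0 = fun _ _ => 0 := by
  funext x y; simp [dirDerivX]

@[simp] lemma dirDerivY_fun_zero (v : ι → ℝ) :
    dirDerivY (fun _ _ => (0 : ℝ)) v = fun _ _ => 0 := by
  funext x y; simp [dirDerivY]

lemma dirDerivY_congr (h : Function.uncurry u =ᶠ[𝓝 (x, y)] Function.uncurry u') (v : ι → ℝ) :
    dirDerivY u v x y = dirDerivY u' v x y := by
  have hy : u x =ᶠ[𝓝 y] u' x := (continuousAt_const.prodMk continuousAt_id).eventually h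
  simp only [dirDerivY, hy.fderiv_eq]

lemma dirDerivX_congr (h : Function.uncurry u =ᶠ[𝓝 (x, y)] Function.uncurry u') (v : ι → ℝ) :
    dirDerivX u v x y = dirDerivX u' v x y := by
  have hx : (fun x' => u x' y) =ᶠ[𝓝 x] fun x' => u' x' y :=
    (continuousAt_id.prodMk continuousAt_const).eventually h
  simp only [dirDerivX, hx.fderiv_eq]

variable [Fintype ι] [Fintype κ]

def JointlySmoothAt (g : (ι → ℝ) → (ι → ℝ) → ℝ) (x y : ι → ℝ) : Prop :=
  ContDiffAt ℝ (⊤ : ℕ∞) (fun p : (ι → ℝ) × (ι → ℝ) => g p.1 p.2) (x, y)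

lemma ContinuousLinearMap.apply_eq_sum_mul_single [DecidableEq ι] (L : (ι → ℝ) →L[ℝ] ℝ)
    (v : ι → ℝ) : L v = ∑ b, v b * L (Pi.single b 1) := by
  conv_lhs => rw [← Finset.univ_sum_single v]
  rw [map_sum]
  refine Finset.sum_congr rfl fun b _ => ?_
  rw [← smul_eq_mul, ← map_smul, ← Pi.single_smul', smul_eq_mul, mul_one]

lemma dirDerivY_single [DecidableEq ι] (β : ι) :
    dirDerivY g (Pi.single β 1) = pdy g β :=
  rfl

lemma dirDerivX_single [DecidableEq ι] (γ : ι) :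
    dirDerivX g (Pi.single γ 1) = pdx g γ :=
  rfl

lemma dirDerivY_eq_sum [DecidableEq ι] (v : ι → ℝ) :
    dirDerivY g v x y = ∑ β, v β * pdy g β x y :=
  (fderiv ℝ (g x) y).apply_eq_sum_mul_single v

lemma dirDerivX_eq_sum [DecidableEq ι] (v : ι → ℝ) :
    dirDerivX g v x y = ∑ γ, v γ * pdx g γ x y :=
  (fderiv ℝ (fun x' => g x' y) x).apply_eq_sum_mul_single v

lemma dirDerivY_mul (hu : DifferentiableAt ℝ (u x) y) (hu' : DifferentiableAt ℝ (u' x) y)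
    (v : ι → ℝ) : dirDerivY (fun x y => u x y * u' x y) v x y =
      dirDerivY u v x y * u' x y + u x y * dirDerivY u' v x y := by
  simp only [dirDerivY, fderiv_fun_mul hu hu', _root_.add_apply, _root_.smul_apply, smul_eq_mul]
  ring

lemma dirDerivX_mul (hu : DifferentiableAt ℝ (fun x' => u x' y) x)
    (hu' : DifferentiableAt ℝ (fun x' => u' x' y) x) (v : ι → ℝ) :
    dirDerivX (fun x y => u x y * u' x y) v x y =
      dirDerivX u v x y * u' x y + u x y * dirDerivX u' v x y := by
  simp only [dirDerivX, fderiv_fun_mul hu hu', _root_.add_apply, _root_.smul_apply, smul_eq_mul]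
  ring

lemma fderiv_comp₂_apply {E : Type*} [NormedAddCommGroup E] [NormedSpace ℝ E]
    {φ : ℝ → ℝ → ℝ} {a b : E → ℝ} {z : E}
    (hφ : DifferentiableAt ℝ (fun p : ℝ × ℝ => φ p.1 p.2) (a z, b z))
    (ha : DifferentiableAt ℝ a z) (hb : DifferentiableAt ℝ b z) (v : E) :
    fderiv ℝ (fun z => φ (a z) (b z)) z v =
      pderivS φ (a z) (b z) * fderiv ℝ a z v + pderivT φ (a z) (b z) * fderiv ℝ b z v := by
  set D := fderiv ℝ (fun p : ℝ × ℝ => φ p.1 p.2) (a z, b z)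
  have hS : pderivS φ (a z) (b z) = D (1, 0) := by
    have h := hφ.hasFDerivAt.comp_hasDerivAt (a z)
      ((hasDerivAt_id (a z)).prodMk (hasDerivAt_const (a z) (b z)))
    exact (by simpa [Function.comp_def] using h : HasDerivAt (φ · (b z)) (D (1, 0)) (a z)).deriv
  have hT : pderivT φ (a z) (b z) = D (0, 1) := by
    have h := hφ.hasFDerivAt.comp_hasDerivAt (b z)
      ((hasDerivAt_const (b z) (a z)).prodMk (hasDerivAt_id (b z)))
    exact (by simpa [Function.comp_def] using h : HasDerivAt (φ (a z) ·) (D (0, 1)) (b z)).deriv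
  have hcomp : HasFDerivAt (fun z => φ (a z) (b z))
      (D.comp ((fderiv ℝ a z).prod (fderiv ℝ b z))) z :=
    hφ.hasFDerivAt.comp (g := fun p : ℝ × ℝ => φ p.1 p.2) z
      (ha.hasFDerivAt.prodMk hb.hasFDerivAt)
  have hsplit : ((fderiv ℝ a z v, fderiv ℝ b z v) : ℝ × ℝ) =
      fderiv ℝ a z v • ((1 : ℝ), (0 : ℝ)) + fderiv ℝ b z v • ((0 : ℝ), (1 : ℝ)) := by
    ext <;> simp
  rw [hcomp.fderiv, ContinuousLinearMap.comp_apply, ContinuousLinearMap.prod_apply, hsplit,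
    map_add, map_smul, map_smul, hS, hT, smul_eq_mul, smul_eq_mul]
  ring

lemma fderiv_comp_precomp_apply (e : κ → ι) {w : (κ → ℝ) → ℝ} {z : ι → ℝ}
    (hw : DifferentiableAt ℝ w (z ∘ e)) (v : ι → ℝ) :
    fderiv ℝ (fun z => w (z ∘ e)) z v = fderiv ℝ w (z ∘ e) (v ∘ e) := by
  let L : (ι → ℝ) →L[ℝ] (κ → ℝ) := (LinearMap.funLeft ℝ ℝ e).toContinuousLinearMap
  have h : HasFDerivAt (fun z => w (z ∘ e)) ((fderiv ℝ w (z ∘ e)).comp L) z :=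
    hw.hasFDerivAt.comp z L.hasFDerivAt
  rw [h.fderiv]
  rfl

lemma dirDerivY_comp₂ {φ : ℝ → ℝ → ℝ}
    (hφ : DifferentiableAt ℝ (fun p : ℝ × ℝ => φ p.1 p.2) (u x y, u' x y))
    (hu : DifferentiableAt ℝ (u x) y) (hu' : DifferentiableAt ℝ (u' x) y) (v : ι → ℝ) :
    dirDerivY (fun x y => φ (u x y) (u' x y)) v x y =
      pderivS φ (u x y) (u' x y) * dirDerivY u v x y +
        pderivT φ (u x y) (u' x y) * dirDerivY u' v x y :=
  fderiv_comp₂_apply hφ hu hu' v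

lemma dirDerivX_comp₂ {φ : ℝ → ℝ → ℝ}
    (hφ : DifferentiableAt ℝ (fun p : ℝ × ℝ => φ p.1 p.2) (u x y, u' x y))
    (hu : DifferentiableAt ℝ (fun x' => u x' y) x)
    (hu' : DifferentiableAt ℝ (fun x' => u' x' y) x) (v : ι → ℝ) :
    dirDerivX (fun x y => φ (u x y) (u' x y)) v x y =
      pderivS φ (u x y) (u' x y) * dirDerivX u v x y +
        pderivT φ (u x y) (u' x y) * dirDerivX u' v x y :=
  fderiv_comp₂_apply (a := fun x' => u x' y) (b := fun x' => u' x' y) hφ hu hu' v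

lemma dirDerivY_pullback (e : κ → ι) {S : (κ → ℝ) → (κ → ℝ) → ℝ}
    (hS : DifferentiableAt ℝ (S (x ∘ e)) (y ∘ e)) (v : ι → ℝ) :
    dirDerivY (fun x y => S (x ∘ e) (y ∘ e)) v x y = dirDerivY S (v ∘ e) (x ∘ e) (y ∘ e) :=
  fderiv_comp_precomp_apply e hS v

lemma dirDerivX_pullback (e : κ → ι) {S : (κ → ℝ) → (κ → ℝ) → ℝ}
    (hS : DifferentiableAt ℝ (fun x' => S x' (y ∘ e)) (x ∘ e)) (v : ι → ℝ) :
    dirDerivX (fun x y => S (x ∘ e) (y ∘ e)) v x y = dirDerivX S (v ∘ e) (x ∘ e) (y ∘ e) :=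
  fderiv_comp_precomp_apply e (w := fun x' => S x' (y ∘ e)) hS v

namespace JointlySmoothAt

lemma differentiableAt_y (hg : JointlySmoothAt g x y) : DifferentiableAt ℝ (g x) y := by
  unfold JointlySmoothAt at hg
  exact (hg.comp y (contDiffAt_const.prodMk contDiffAt_id)).differentiableAt (by simp)

lemma differentiableAt_x (hg : JointlySmoothAt g x y) :
    DifferentiableAt ℝ (fun x' => g x' y) x := by
  unfold JointlySmoothAt at hg
  exact (hg.comp x (contDiffAt_id.prodMk contDiffAt_const)).differentiableAt (by simp)

lemma dirDerivY (hg : JointlySmoothAt g x y) (v : ι → ℝ) :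
    JointlySmoothAt (dirDerivY g v) x y := by
  unfold JointlySmoothAt at hg
  have h : ContDiffAt ℝ (⊤ : ℕ∞)
      (fun p : (ι → ℝ) × (ι → ℝ) => fderiv ℝ (g p.1) p.2) (x, y) :=
    ContDiffAt.fderiv (f := fun p y' => g p.1 y') (g := Prod.snd)
      (hg.comp ((x, y), y)
        ((contDiffAt_fst.comp _ contDiffAt_fst).prodMk contDiffAt_snd))
      contDiffAt_snd le_rfl
  exact h.clm_apply contDiffAt_const

lemma dirDerivX (hg : JointlySmoothAt g x y) (v : ι → ℝ) :
    JointlySmoothAt (dirDerivX g v) x y := by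
  unfold JointlySmoothAt at hg
  have h : ContDiffAt ℝ (⊤ : ℕ∞)
      (fun p : (ι → ℝ) × (ι → ℝ) => fderiv ℝ (fun x' => g x' p.2) p.1) (x, y) :=
    ContDiffAt.fderiv (f := fun p x' => g x' p.2) (g := Prod.fst)
      (hg.comp ((x, y), x)
        (contDiffAt_snd.prodMk (contDiffAt_snd.comp _ contDiffAt_fst)))
      contDiffAt_fst le_rfl
  exact h.clm_apply contDiffAt_const

lemma mul (hu : JointlySmoothAt u x y) (hu' : JointlySmoothAt u' x y) :
    JointlySmoothAt (fun x y => u x y * u' x y) x y :=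
  ContDiffAt.mul hu hu'

lemma pullback (e : κ → ι) {S : (κ → ℝ) → (κ → ℝ) → ℝ}
    (hS : JointlySmoothAt S (x ∘ e) (y ∘ e)) :
    JointlySmoothAt (fun x y => S (x ∘ e) (y ∘ e)) x y := by
  unfold JointlySmoothAt at hS
  exact hS.comp (x, y) (by fun_prop : ContDiff ℝ (⊤ : ℕ∞)
    fun p : (ι → ℝ) × (ι → ℝ) => (p.1 ∘ e, p.2 ∘ e)).contDiffAt

end JointlySmoothAt

lemma eventually_dirDerivY_eq_pullback {e : κ → ι} {S : (κ → ℝ) → (κ → ℝ) → ℝ}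
    (hu : ∀ᶠ p in 𝓝 (x, y), u p.1 p.2 = S (p.1 ∘ e) (p.2 ∘ e))
    (hS : ∀ᶠ q in 𝓝 (x ∘ e, y ∘ e), JointlySmoothAt S q.1 q.2) (v : ι → ℝ) :
    ∀ᶠ p in 𝓝 (x, y), dirDerivY u v p.1 p.2 = dirDerivY S (v ∘ e) (p.1 ∘ e) (p.2 ∘ e) := by
  have hres : Tendsto (fun p : (ι → ℝ) × (ι → ℝ) => (p.1 ∘ e, p.2 ∘ e))
      (𝓝 (x, y)) (𝓝 (x ∘ e, y ∘ e)) :=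
    (by fun_prop : Continuous fun p : (ι → ℝ) × (ι → ℝ) => (p.1 ∘ e, p.2 ∘ e)).tendsto _
  filter_upwards [hu.eventually_nhds, hres.eventually hS] with p hup hSp
  rw [dirDerivY_congr (u' := fun a b => S (a ∘ e) (b ∘ e)) hup,
    dirDerivY_pullback e hSp.differentiableAt_y]

end DirectionalDerivatives

lemma contDiffAt_pderivS {φ : ℝ → ℝ → ℝ} {s t : ℝ}
    (hφ : ContDiffAt ℝ (⊤ : ℕ∞) (fun p : ℝ × ℝ => φ p.1 p.2) (s, t)) :
    ContDiffAt ℝ (⊤ : ℕ∞) (fun p : ℝ × ℝ => pderivS φ p.1 p.2) (s, t) := by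
  simp only [pderivS, ← fderiv_apply_one_eq_deriv]
  refine ContDiffAt.clm_apply ?_ contDiffAt_const
  exact ContDiffAt.fderiv (f := fun (p : ℝ × ℝ) u => φ u p.2) (g := Prod.fst)
    (hφ.comp ((s, t), s) (contDiffAt_snd.prodMk (contDiffAt_snd.comp _ contDiffAt_fst)))
    contDiffAt_fst le_rfl

lemma contDiffAt_pderivT {φ : ℝ → ℝ → ℝ} {s t : ℝ}
    (hφ : ContDiffAt ℝ (⊤ : ℕ∞) (fun p : ℝ × ℝ => φ p.1 p.2) (s, t)) :
    ContDiffAt ℝ (⊤ : ℕ∞) (fun p : ℝ × ℝ => pderivT φ p.1 p.2) (s, t) := by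
  simp only [pderivT, ← fderiv_apply_one_eq_deriv]
  refine ContDiffAt.clm_apply ?_ contDiffAt_const
  exact ContDiffAt.fderiv (f := fun (p : ℝ × ℝ) v => φ p.1 v) (g := Prod.snd)
    (hφ.comp ((s, t), t) ((contDiffAt_fst.comp _ contDiffAt_fst).prodMk contDiffAt_snd))
    contDiffAt_snd le_rfl

section MatrixSmoothness

variable {ι E : Type*} [Fintype ι] [DecidableEq ι] [NormedAddCommGroup E] [NormedSpace ℝ E]
  {n : WithTop ℕ∞} {M : E → Matrix ι ι ℝ} {q : E}

lemma contDiffAt_matrix_det (hM : ∀ i j, ContDiffAt ℝ n (fun p => M p i j) q) :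
    ContDiffAt ℝ n (fun p => (M p).det) q := by
  simp only [Matrix.det_apply, Units.smul_def, zsmul_eq_mul]
  exact ContDiffAt.sum fun σ _ => contDiffAt_const.mul (contDiffAt_prod fun i _ => hM (σ i) i)

lemma contDiffAt_matrix_adjugate (hM : ∀ i j, ContDiffAt ℝ n (fun p => M p i j) q) (i j : ι) :
    ContDiffAt ℝ n (fun p => (M p).adjugate i j) q := by
  simp only [Matrix.adjugate_apply]
  refine contDiffAt_matrix_det fun k l => ?_
  by_cases hk : k = j
  · simp only [hk, Matrix.updateRow_self]
    exact contDiffAt_const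
  · simp only [Matrix.updateRow_ne hk]
    exact hM k l

lemma contDiffAt_matrix_inv (hM : ∀ i j, ContDiffAt ℝ n (fun p => M p i j) q)
    (hdet : (M q).det ≠ 0) (i j : ι) : ContDiffAt ℝ n (fun p => (M p)⁻¹ i j) q := by
  simp only [Matrix.inv_def, Matrix.smul_apply, Ring.inverse_eq_inv', smul_eq_mul]
  exact ((contDiffAt_matrix_det hM).inv hdet).mul (contDiffAt_matrix_adjugate hM i j)

end MatrixSmoothness

lemma fderiv_apply_self_of_homogeneous {E : Type*} [NormedAddCommGroup E] [NormedSpace ℝ E]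
    {u : E → ℝ} {y : E} {d : ℕ} (hu : DifferentiableAt ℝ u y)
    (hhom : ∀ᶠ c in 𝓝 (1 : ℝ), u (c • y) = c ^ d * u y) :
    fderiv ℝ u y y = d * u y := by
  have hline : HasDerivAt (fun c : ℝ => u (c • y)) (fderiv ℝ u y y) 1 := by
    have h := (one_smul ℝ y).symm ▸ hu.hasFDerivAt
    simpa [Function.comp_def] using h.comp_hasDerivAt 1 ((hasDerivAt_id (1 : ℝ)).smul_const y)
  have hpow : HasDerivAt (fun c : ℝ => c ^ d * u y) (d * u y) 1 := by
    simpa using (hasDerivAt_pow d (1 : ℝ)).mul_const (u y)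
  rw [← hline.deriv, Filter.EventuallyEq.deriv_eq hhom, hpow.deriv]

section Finsler

variable {ι : Type*} [Fintype ι] [DecidableEq ι]

noncomputable def sprayRhs (F : (ι → ℝ) → (ι → ℝ) → ℝ) (β : ι) (x y : ι → ℝ) : ℝ :=
  dirDerivX (pdy (fun x y => F x y ^ 2) β) y x y - pdx (fun x y => F x y ^ 2) β x y

variable {U : Set (ι → ℝ)} {F : (ι → ℝ) → (ι → ℝ) → ℝ} {x y : ι → ℝ}

lemma dirDerivY_pdy_sq_eq_vecMul (w : ι → ℝ) (β : ι) :
    dirDerivY (pdy (fun x y => F x y ^ 2) β) w x y = (w ᵥ* fundTensor F x y) β := by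
  rw [dirDerivY_eq_sum]
  rfl

lemma spray_eq_inv_mulVec (α : ι) :
    spray F α x y = 1 / 2 * ((fundTensor F x y)⁻¹ *ᵥ fun β => sprayRhs F β x y) α := by
  simp only [spray, sprayRhs, dirDerivX_eq_sum, mulVec, dotProduct]
  simp_rw [mul_comm (y _)]

namespace IsFinslerMetric

lemma eventually_mem_slit (hF : IsFinslerMetric U F) (hx : x ∈ U) (hy : y ≠ 0) :
    ∀ᶠ p in 𝓝 (x, y), p.1 ∈ U ∧ p.2 ≠ 0 :=
  (hF.isOpen.prod isOpen_ne).mem_nhds ⟨hx, hy⟩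

lemma jointlySmoothAt_sq (hF : IsFinslerMetric U F) (hx : x ∈ U) (hy : y ≠ 0) :
    JointlySmoothAt (fun x y => F x y ^ 2) x y :=
  hF.smooth.contDiffAt ((hF.isOpen.prod isOpen_ne).mem_nhds ⟨hx, hy⟩)

lemma sq_smul (hF : IsFinslerMetric U F) (hx : x ∈ U) (y : ι → ℝ) (c : ℝ) :
    F x (c • y) ^ 2 = c ^ 2 * F x y ^ 2 := by
  rw [hF.homog x hx y c, mul_pow, sq_abs]

lemma dirDerivY_sq_self (hF : IsFinslerMetric U F) (hx : x ∈ U) (hy : y ≠ 0) :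
    dirDerivY (fun x y => F x y ^ 2) y x y = 2 * F x y ^ 2 := by
  have h := fderiv_apply_self_of_homogeneous (d := 2)
    (hF.jointlySmoothAt_sq hx hy).differentiableAt_y
    (Eventually.of_forall fun c => hF.sq_smul hx y c)
  rwa [Nat.cast_ofNat] at h

lemma pdy_sq_smul (hF : IsFinslerMetric U F) (hx : x ∈ U) (hy : y ≠ 0) {c : ℝ} (hc : c ≠ 0)
    (β : ι) : pdy (fun x y => F x y ^ 2) β x (c • y) = c * pdy (fun x y => F x y ^ 2) β x y := by
  have h := fderiv_comp_smul (f := fun y => F x y ^ 2) (x := y) c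
  have hfun : (fun y' => F x (c • y') ^ 2) = fun y' => c ^ 2 * F x y' ^ 2 :=
    funext (hF.sq_smul hx · c)
  rw [hfun, fderiv_const_mul (hF.jointlySmoothAt_sq hx hy).differentiableAt_y] at h
  have := congrArg (· (Pi.single β (1 : ℝ))) h
  simp only [_root_.smul_apply, smul_eq_mul] at this
  unfold pdy
  apply mul_left_cancel₀ hc
  linear_combination -this

lemma dirDerivY_pdy_sq_self (hF : IsFinslerMetric U F) (hx : x ∈ U) (hy : y ≠ 0) (β : ι) :
    dirDerivY (pdy (fun x y => F x y ^ 2) β) y x y = pdy (fun x y => F x y ^ 2) β x y := by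
  have h := fderiv_apply_self_of_homogeneous (d := 1)
    (((hF.jointlySmoothAt_sq hx hy).dirDerivY _).differentiableAt_y)
    ((eventually_ne_nhds one_ne_zero).mono fun c hc => by
      rw [pow_one]; exact hF.pdy_sq_smul hx hy hc β)
  rwa [Nat.cast_one, one_mul] at h

lemma vecMul_fundTensor_self (hF : IsFinslerMetric U F) (hx : x ∈ U) (hy : y ≠ 0) :
    y ᵥ* fundTensor F x y = fun β => pdy (fun x y => F x y ^ 2) β x y :=
  funext fun β => (dirDerivY_pdy_sq_eq_vecMul y β).symm.trans (hF.dirDerivY_pdy_sq_self hx hy β)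

lemma sum_mul_dirDerivX_pdy_sq (hF : IsFinslerMetric U F) (hx : x ∈ U) (hy : y ≠ 0)
    (v : ι → ℝ) : ∑ β, y β * dirDerivX (pdy (fun x y => F x y ^ 2) β) v x y =
      2 * dirDerivX (fun x y => F x y ^ 2) v x y := by
  have hG := hF.jointlySmoothAt_sq hx hy
  have heq : (fun x' => ∑ β, y β * pdy (fun x y => F x y ^ 2) β x' y) =ᶠ[𝓝 x]
      fun x' => 2 * F x' y ^ 2 := by
    filter_upwards [hF.isOpen.mem_nhds hx] with x' hx'
    rw [← dirDerivY_eq_sum, hF.dirDerivY_sq_self hx' hy]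
  have hsum := HasFDerivAt.fun_sum (u := Finset.univ) fun β _ =>
    ((hG.dirDerivY (Pi.single β 1)).differentiableAt_x.hasFDerivAt.const_mul (y β))
  have := congrArg (· v) (hsum.fderiv.symm.trans
    (heq.fderiv_eq.trans (fderiv_const_mul hG.differentiableAt_x 2)))
  simp only [_root_.sum_apply, _root_.smul_apply, smul_eq_mul] at this
  exact this

lemma fundTensor_transpose (hF : IsFinslerMetric U F) (hx : x ∈ U) (hy : y ≠ 0) :
    (fundTensor F x y)ᵀ = fundTensor F x y := by
  rw [← conjTranspose_eq_transpose_of_trivial]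
  exact (hF.posDef x hx y hy).isHermitian

lemma dirDerivY_pdy_sq_eq_sprayRhs_iff (hF : IsFinslerMetric U F) (hx : x ∈ U) (hy : y ≠ 0)
    (w : ι → ℝ) :
    (∀ β, dirDerivY (pdy (fun x y => F x y ^ 2) β) w x y = sprayRhs F β x y) ↔
      w = fun α => 2 * spray F α x y := by
  set g := fundTensor F x y
  have hdet : IsUnit g.det := isUnit_iff_ne_zero.mpr (hF.posDef x hx y hy).det_pos.ne'
  have hspray : (fun α => 2 * spray F α x y) = g⁻¹ *ᵥ fun β => sprayRhs F β x y := by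
    funext α
    rw [spray_eq_inv_mulVec]
    ring
  have hsys : (∀ β, dirDerivY (pdy (fun x y => F x y ^ 2) β) w x y = sprayRhs F β x y) ↔
      g *ᵥ w = fun β => sprayRhs F β x y := by
    rw [← vecMul_transpose, hF.fundTensor_transpose hx hy, funext_iff]
    simp only [dirDerivY_pdy_sq_eq_vecMul]
  rw [hsys, hspray]
  constructor
  · intro h
    rw [← h, mulVec_mulVec, nonsing_inv_mul _ hdet, one_mulVec]
  · intro h
    rw [h, mulVec_mulVec, mul_nonsing_inv _ hdet, one_mulVec]

lemma dirDerivY_sq_two_mul_spray (hF : IsFinslerMetric U F) (hx : x ∈ U) (hy : y ≠ 0) :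
    dirDerivY (fun x y => F x y ^ 2) (fun α => 2 * spray F α x y) x y =
      dirDerivX (fun x y => F x y ^ 2) y x y := by
  set g := fundTensor F x y
  set w := fun α => 2 * spray F α x y
  have hw := (hF.dirDerivY_pdy_sq_eq_sprayRhs_iff hx hy w).2 rfl
  calc dirDerivY (fun x y => F x y ^ 2) w x y = w ⬝ᵥ (y ᵥ* g) := by
        rw [dirDerivY_eq_sum, hF.vecMul_fundTensor_self hx hy]
        rfl
    _ = (w ᵥ* g) ⬝ᵥ y := by
        rw [← mulVec_transpose, hF.fundTensor_transpose hx hy, dotProduct_mulVec]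
    _ = ∑ β, y β * sprayRhs F β x y := by
        rw [dotProduct]
        exact Finset.sum_congr rfl fun β _ => by rw [← dirDerivY_pdy_sq_eq_vecMul, hw, mul_comm]
    _ = dirDerivX (fun x y => F x y ^ 2) y x y := by
        simp only [sprayRhs, mul_sub, Finset.sum_sub_distrib, hF.sum_mul_dirDerivX_pdy_sq hx hy,
          ← dirDerivX_eq_sum]
        ring

lemma jointlySmoothAt_spray (hF : IsFinslerMetric U F) (hx : x ∈ U) (hy : y ≠ 0) (α : ι) :
    JointlySmoothAt (spray F α) x y := by
  have hG := hF.jointlySmoothAt_sq hx hy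
  have hg : ∀ i j, ContDiffAt ℝ (⊤ : ℕ∞)
      (fun p : (ι → ℝ) × (ι → ℝ) => fundTensor F p.1 p.2 i j) (x, y) :=
    fun i j => (hG.dirDerivY _).dirDerivY _
  have hinv := contDiffAt_matrix_inv hg (hF.posDef x hx y hy).det_pos.ne'
  have hcoord : ∀ γ, JointlySmoothAt (fun _ y => y γ) x y := fun γ =>
    contDiffAt_pi.mp contDiffAt_snd γ
  have hnum : ∀ β, JointlySmoothAt (fun x y =>
      (∑ γ, pdx (pdy (fun x y => F x y ^ 2) β) γ x y * y γ) -
        pdx (fun x y => F x y ^ 2) β x y) x y := fun β =>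
    (ContDiffAt.sum fun γ _ => ((hG.dirDerivY _).dirDerivX _).mul (hcoord γ)).sub
      (hG.dirDerivX _)
  exact contDiffAt_const.mul (ContDiffAt.sum fun β _ => (hinv α β).mul (hnum β))

end IsFinslerMetric

end Finsler

lemma berwaldCurv_eq_of_eventually_pullback {ι κ : Type*} [Fintype ι] [DecidableEq ι]
    [Fintype κ] {F : (ι → ℝ) → (ι → ℝ) → ℝ} {S : (κ → ℝ) → (κ → ℝ) → ℝ} {e : κ → ι}
    {x y : ι → ℝ} {α : ι}
    (hspray : ∀ᶠ p in 𝓝 (x, y), spray F α p.1 p.2 = S (p.1 ∘ e) (p.2 ∘ e))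
    (hS : ∀ᶠ q in 𝓝 (x ∘ e, y ∘ e), JointlySmoothAt S q.1 q.2) (β γ η : ι) :
    berwaldCurv F α β γ η x y = dirDerivY (dirDerivY (dirDerivY S
      (Pi.single η 1 ∘ e)) (Pi.single γ 1 ∘ e)) (Pi.single β 1 ∘ e) (x ∘ e) (y ∘ e) := by
  have h₁ := eventually_dirDerivY_eq_pullback hspray hS (Pi.single η 1)
  have h₂ := eventually_dirDerivY_eq_pullback h₁
    (hS.mono fun q hq => hq.dirDerivY _) (Pi.single γ 1)
  have h₃ := eventually_dirDerivY_eq_pullback h₂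
    (hS.mono fun q hq => (hq.dirDerivY _).dirDerivY _) (Pi.single β 1)
  exact h₃.self_of_nhds

section SingleComp

variable {ι₁ ι₂ : Type*} [DecidableEq ι₁] [DecidableEq ι₂]

@[simp] lemma Pi.single_inl_comp_inl (i : ι₁) :
    (Pi.single (Sum.inl i) (1 : ℝ) : ι₁ ⊕ ι₂ → ℝ) ∘ Sum.inl = Pi.single i 1 := by
  ext; simp [Pi.single_apply]

@[simp] lemma Pi.single_inr_comp_inr (i : ι₂) :
    (Pi.single (Sum.inr i) (1 : ℝ) : ι₁ ⊕ ι₂ → ℝ) ∘ Sum.inr = Pi.single i 1 := by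
  ext; simp [Pi.single_apply]

@[simp] lemma Pi.single_inr_comp_inl (i : ι₂) :
    (Pi.single (Sum.inr i) (1 : ℝ) : ι₁ ⊕ ι₂ → ℝ) ∘ Sum.inl = 0 := by
  ext; simp

@[simp] lemma Pi.single_inl_comp_inr (i : ι₁) :
    (Pi.single (Sum.inl i) (1 : ℝ) : ι₁ ⊕ ι₂ → ℝ) ∘ Sum.inr = 0 := by
  ext; simp

end SingleComp

section MinkowskiCombination

variable {ι₁ ι₂ : Type*} [Fintype ι₁] [Fintype ι₂] {φ : ℝ → ℝ → ℝ} {P : (ι₁ → ℝ) → (ι₁ → ℝ) → ℝ}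
  {Q : (ι₂ → ℝ) → (ι₂ → ℝ) → ℝ} {x y : ι₁ ⊕ ι₂ → ℝ}

lemma dirDerivY_comp₂_pullback
    (hφ : DifferentiableAt ℝ (fun p : ℝ × ℝ => φ p.1 p.2)
      (P (x ∘ Sum.inl) (y ∘ Sum.inl), Q (x ∘ Sum.inr) (y ∘ Sum.inr)))
    (hP : JointlySmoothAt P (x ∘ Sum.inl) (y ∘ Sum.inl))
    (hQ : JointlySmoothAt Q (x ∘ Sum.inr) (y ∘ Sum.inr)) (v : ι₁ ⊕ ι₂ → ℝ) :
    dirDerivY (fun x y => φ (P (x ∘ Sum.inl) (y ∘ Sum.inl)) (Q (x ∘ Sum.inr) (y ∘ Sum.inr)))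
        v x y =
      pderivS φ (P (x ∘ Sum.inl) (y ∘ Sum.inl)) (Q (x ∘ Sum.inr) (y ∘ Sum.inr)) *
          dirDerivY P (v ∘ Sum.inl) (x ∘ Sum.inl) (y ∘ Sum.inl) +
        pderivT φ (P (x ∘ Sum.inl) (y ∘ Sum.inl)) (Q (x ∘ Sum.inr) (y ∘ Sum.inr)) *
          dirDerivY Q (v ∘ Sum.inr) (x ∘ Sum.inr) (y ∘ Sum.inr) := by
  rw [dirDerivY_comp₂ hφ (hP.pullback Sum.inl).differentiableAt_y
      (hQ.pullback Sum.inr).differentiableAt_y,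
    dirDerivY_pullback Sum.inl hP.differentiableAt_y,
    dirDerivY_pullback Sum.inr hQ.differentiableAt_y]

lemma dirDerivX_comp₂_pullback
    (hφ : DifferentiableAt ℝ (fun p : ℝ × ℝ => φ p.1 p.2)
      (P (x ∘ Sum.inl) (y ∘ Sum.inl), Q (x ∘ Sum.inr) (y ∘ Sum.inr)))
    (hP : JointlySmoothAt P (x ∘ Sum.inl) (y ∘ Sum.inl))
    (hQ : JointlySmoothAt Q (x ∘ Sum.inr) (y ∘ Sum.inr)) (v : ι₁ ⊕ ι₂ → ℝ) :
    dirDerivX (fun x y => φ (P (x ∘ Sum.inl) (y ∘ Sum.inl)) (Q (x ∘ Sum.inr) (y ∘ Sum.inr)))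
        v x y =
      pderivS φ (P (x ∘ Sum.inl) (y ∘ Sum.inl)) (Q (x ∘ Sum.inr) (y ∘ Sum.inr)) *
          dirDerivX P (v ∘ Sum.inl) (x ∘ Sum.inl) (y ∘ Sum.inl) +
        pderivT φ (P (x ∘ Sum.inl) (y ∘ Sum.inl)) (Q (x ∘ Sum.inr) (y ∘ Sum.inr)) *
          dirDerivX Q (v ∘ Sum.inr) (x ∘ Sum.inr) (y ∘ Sum.inr) := by
  rw [dirDerivX_comp₂ hφ (hP.pullback Sum.inl).differentiableAt_x
      (hQ.pullback Sum.inr).differentiableAt_x,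
    dirDerivX_pullback Sum.inl hP.differentiableAt_x,
    dirDerivX_pullback Sum.inr hQ.differentiableAt_x]

variable {κ : Type*} [Fintype κ] {C : (κ → ℝ) → (κ → ℝ) → ℝ} {e : κ → ι₁ ⊕ ι₂}

lemma dirDerivY_comp₂_pullback_mul
    (hφ : DifferentiableAt ℝ (fun p : ℝ × ℝ => φ p.1 p.2)
      (P (x ∘ Sum.inl) (y ∘ Sum.inl), Q (x ∘ Sum.inr) (y ∘ Sum.inr)))
    (hP : JointlySmoothAt P (x ∘ Sum.inl) (y ∘ Sum.inl))
    (hQ : JointlySmoothAt Q (x ∘ Sum.inr) (y ∘ Sum.inr))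
    (hC : JointlySmoothAt C (x ∘ e) (y ∘ e)) (v : ι₁ ⊕ ι₂ → ℝ) :
    dirDerivY (fun x y => φ (P (x ∘ Sum.inl) (y ∘ Sum.inl)) (Q (x ∘ Sum.inr) (y ∘ Sum.inr)) *
        C (x ∘ e) (y ∘ e)) v x y =
      (pderivS φ (P (x ∘ Sum.inl) (y ∘ Sum.inl)) (Q (x ∘ Sum.inr) (y ∘ Sum.inr)) *
          dirDerivY P (v ∘ Sum.inl) (x ∘ Sum.inl) (y ∘ Sum.inl) +
        pderivT φ (P (x ∘ Sum.inl) (y ∘ Sum.inl)) (Q (x ∘ Sum.inr) (y ∘ Sum.inr)) *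
          dirDerivY Q (v ∘ Sum.inr) (x ∘ Sum.inr) (y ∘ Sum.inr)) * C (x ∘ e) (y ∘ e) +
      φ (P (x ∘ Sum.inl) (y ∘ Sum.inl)) (Q (x ∘ Sum.inr) (y ∘ Sum.inr)) *
        dirDerivY C (v ∘ e) (x ∘ e) (y ∘ e) := by
  have hφPQ : DifferentiableAt ℝ
      (fun y' => φ (P (x ∘ Sum.inl) (y' ∘ Sum.inl)) (Q (x ∘ Sum.inr) (y' ∘ Sum.inr))) y :=
    hφ.comp (g := fun p : ℝ × ℝ => φ p.1 p.2) y
      ((hP.pullback Sum.inl).differentiableAt_y.prodMk (hQ.pullback Sum.inr).differentiableAt_y)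
  rw [dirDerivY_mul hφPQ (hC.pullback e).differentiableAt_y, dirDerivY_comp₂_pullback hφ hP hQ,
    dirDerivY_pullback e hC.differentiableAt_y]

lemma dirDerivX_comp₂_pullback_mul
    (hφ : DifferentiableAt ℝ (fun p : ℝ × ℝ => φ p.1 p.2)
      (P (x ∘ Sum.inl) (y ∘ Sum.inl), Q (x ∘ Sum.inr) (y ∘ Sum.inr)))
    (hP : JointlySmoothAt P (x ∘ Sum.inl) (y ∘ Sum.inl))
    (hQ : JointlySmoothAt Q (x ∘ Sum.inr) (y ∘ Sum.inr))
    (hC : JointlySmoothAt C (x ∘ e) (y ∘ e)) (v : ι₁ ⊕ ι₂ → ℝ) :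
    dirDerivX (fun x y => φ (P (x ∘ Sum.inl) (y ∘ Sum.inl)) (Q (x ∘ Sum.inr) (y ∘ Sum.inr)) *
        C (x ∘ e) (y ∘ e)) v x y =
      (pderivS φ (P (x ∘ Sum.inl) (y ∘ Sum.inl)) (Q (x ∘ Sum.inr) (y ∘ Sum.inr)) *
          dirDerivX P (v ∘ Sum.inl) (x ∘ Sum.inl) (y ∘ Sum.inl) +
        pderivT φ (P (x ∘ Sum.inl) (y ∘ Sum.inl)) (Q (x ∘ Sum.inr) (y ∘ Sum.inr)) *
          dirDerivX Q (v ∘ Sum.inr) (x ∘ Sum.inr) (y ∘ Sum.inr)) * C (x ∘ e) (y ∘ e) +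
      φ (P (x ∘ Sum.inl) (y ∘ Sum.inl)) (Q (x ∘ Sum.inr) (y ∘ Sum.inr)) *
        dirDerivX C (v ∘ e) (x ∘ e) (y ∘ e) := by
  have hφPQ : DifferentiableAt ℝ
      (fun x' => φ (P (x' ∘ Sum.inl) (y ∘ Sum.inl)) (Q (x' ∘ Sum.inr) (y ∘ Sum.inr))) x :=
    hφ.comp (g := fun p : ℝ × ℝ => φ p.1 p.2) x
      ((hP.pullback Sum.inl).differentiableAt_x.prodMk (hQ.pullback Sum.inr).differentiableAt_x)
  rw [dirDerivX_mul hφPQ (hC.pullback e).differentiableAt_x, dirDerivX_comp₂_pullback hφ hP hQ,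
    dirDerivX_pullback e hC.differentiableAt_x]

end MinkowskiCombination

namespace IsMinkowskianProduct

variable {m n : ℕ} {U₁ : Set (Fin m → ℝ)} {U₂ : Set (Fin n → ℝ)}
  {F₁ : (Fin m → ℝ) → (Fin m → ℝ) → ℝ} {F₂ : (Fin n → ℝ) → (Fin n → ℝ) → ℝ}
  {f : ℝ → ℝ → ℝ} {F : (Fin m ⊕ Fin n → ℝ) → (Fin m ⊕ Fin n → ℝ) → ℝ}
  {x y : Fin m ⊕ Fin n → ℝ}

lemma sq_eq (hp : IsMinkowskianProduct U₁ U₂ F₁ F₂ f F) :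
    (fun x y => F x y ^ 2) = fun x y =>
      f (F₁ (x ∘ Sum.inl) (y ∘ Sum.inl) ^ 2) (F₂ (x ∘ Sum.inr) (y ∘ Sum.inr) ^ 2) := by
  funext x y
  rw [hp.F_def, Real.sq_sqrt <|
    hp.f_nonneg _ (Set.mem_Ici.2 (sq_nonneg _)) _ (Set.mem_Ici.2 (sq_nonneg _))]

lemma contDiffAt_f (hp : IsMinkowskianProduct U₁ U₂ F₁ F₂ f F) {x₁ y₁ : Fin m → ℝ}
    {x₂ y₂ : Fin n → ℝ} (hx₁ : x₁ ∈ U₁) (hy₁ : y₁ ≠ 0) (hx₂ : x₂ ∈ U₂) (hy₂ : y₂ ≠ 0) :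
    ContDiffAt ℝ (⊤ : ℕ∞) (fun p : ℝ × ℝ => f p.1 p.2) (F₁ x₁ y₁ ^ 2, F₂ x₂ y₂ ^ 2) :=
  hp.f_smooth.contDiffAt <| (isOpen_Ioi.prod isOpen_Ioi).mem_nhds
    ⟨pow_pos (hp.finsler₁.pos _ hx₁ _ hy₁) 2, pow_pos (hp.finsler₂.pos _ hx₂ _ hy₂) 2⟩

lemma eventually_mem_and_ne_zero (hp : IsMinkowskianProduct U₁ U₂ F₁ F₂ f F)
    (hx₁ : x ∘ Sum.inl ∈ U₁) (hx₂ : x ∘ Sum.inr ∈ U₂) (hy₁ : y ∘ Sum.inl ≠ 0)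
    (hy₂ : y ∘ Sum.inr ≠ 0) :
    ∀ᶠ p in 𝓝 (x, y), p.1 ∘ Sum.inl ∈ U₁ ∧ p.1 ∘ Sum.inr ∈ U₂ ∧
      p.2 ∘ Sum.inl ≠ 0 ∧ p.2 ∘ Sum.inr ≠ 0 := by
  have r₁ : Tendsto (fun p : (Fin m ⊕ Fin n → ℝ) × (Fin m ⊕ Fin n → ℝ) =>
      (p.1 ∘ Sum.inl, p.2 ∘ Sum.inl)) (𝓝 (x, y)) (𝓝 (x ∘ Sum.inl, y ∘ Sum.inl)) :=
    (by fun_prop : Continuous _).tendsto _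
  have r₂ : Tendsto (fun p : (Fin m ⊕ Fin n → ℝ) × (Fin m ⊕ Fin n → ℝ) =>
      (p.1 ∘ Sum.inr, p.2 ∘ Sum.inr)) (𝓝 (x, y)) (𝓝 (x ∘ Sum.inr, y ∘ Sum.inr)) :=
    (by fun_prop : Continuous _).tendsto _
  filter_upwards [r₁.eventually (hp.finsler₁.eventually_mem_slit hx₁ hy₁),
    r₂.eventually (hp.finsler₂.eventually_mem_slit hx₂ hy₂)] with p h₁ h₂
  exact ⟨h₁.1, h₂.1, h₁.2, h₂.2⟩

lemma dirDerivY_sq (hp : IsMinkowskianProduct U₁ U₂ F₁ F₂ f F) (hx₁ : x ∘ Sum.inl ∈ U₁)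
    (hx₂ : x ∘ Sum.inr ∈ U₂) (hy₁ : y ∘ Sum.inl ≠ 0) (hy₂ : y ∘ Sum.inr ≠ 0)
    (v : Fin m ⊕ Fin n → ℝ) : dirDerivY (fun x y => F x y ^ 2) v x y =
      pderivS f (F₁ (x ∘ Sum.inl) (y ∘ Sum.inl) ^ 2) (F₂ (x ∘ Sum.inr) (y ∘ Sum.inr) ^ 2) *
          dirDerivY (fun x y => F₁ x y ^ 2) (v ∘ Sum.inl) (x ∘ Sum.inl) (y ∘ Sum.inl) +
        pderivT f (F₁ (x ∘ Sum.inl) (y ∘ Sum.inl) ^ 2) (F₂ (x ∘ Sum.inr) (y ∘ Sum.inr) ^ 2) *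
          dirDerivY (fun x y => F₂ x y ^ 2) (v ∘ Sum.inr) (x ∘ Sum.inr) (y ∘ Sum.inr) := by
  rw [hp.sq_eq]
  exact dirDerivY_comp₂_pullback
    ((hp.contDiffAt_f hx₁ hy₁ hx₂ hy₂).differentiableAt (by simp))
    (hp.finsler₁.jointlySmoothAt_sq hx₁ hy₁) (hp.finsler₂.jointlySmoothAt_sq hx₂ hy₂) v

lemma dirDerivX_sq (hp : IsMinkowskianProduct U₁ U₂ F₁ F₂ f F) (hx₁ : x ∘ Sum.inl ∈ U₁)
    (hx₂ : x ∘ Sum.inr ∈ U₂) (hy₁ : y ∘ Sum.inl ≠ 0) (hy₂ : y ∘ Sum.inr ≠ 0)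
    (v : Fin m ⊕ Fin n → ℝ) : dirDerivX (fun x y => F x y ^ 2) v x y =
      pderivS f (F₁ (x ∘ Sum.inl) (y ∘ Sum.inl) ^ 2) (F₂ (x ∘ Sum.inr) (y ∘ Sum.inr) ^ 2) *
          dirDerivX (fun x y => F₁ x y ^ 2) (v ∘ Sum.inl) (x ∘ Sum.inl) (y ∘ Sum.inl) +
        pderivT f (F₁ (x ∘ Sum.inl) (y ∘ Sum.inl) ^ 2) (F₂ (x ∘ Sum.inr) (y ∘ Sum.inr) ^ 2) *
          dirDerivX (fun x y => F₂ x y ^ 2) (v ∘ Sum.inr) (x ∘ Sum.inr) (y ∘ Sum.inr) := by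
  rw [hp.sq_eq]
  exact dirDerivX_comp₂_pullback
    ((hp.contDiffAt_f hx₁ hy₁ hx₂ hy₂).differentiableAt (by simp))
    (hp.finsler₁.jointlySmoothAt_sq hx₁ hy₁) (hp.finsler₂.jointlySmoothAt_sq hx₂ hy₂) v

lemma pdy_sq_inl (hp : IsMinkowskianProduct U₁ U₂ F₁ F₂ f F) (hx₁ : x ∘ Sum.inl ∈ U₁)
    (hx₂ : x ∘ Sum.inr ∈ U₂) (hy₁ : y ∘ Sum.inl ≠ 0) (hy₂ : y ∘ Sum.inr ≠ 0) (b : Fin m) :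
    pdy (fun x y => F x y ^ 2) (Sum.inl b) x y =
      pderivS f (F₁ (x ∘ Sum.inl) (y ∘ Sum.inl) ^ 2) (F₂ (x ∘ Sum.inr) (y ∘ Sum.inr) ^ 2) *
        pdy (fun x y => F₁ x y ^ 2) b (x ∘ Sum.inl) (y ∘ Sum.inl) := by
  simpa [dirDerivY_single] using hp.dirDerivY_sq hx₁ hx₂ hy₁ hy₂ (Pi.single (Sum.inl b) 1)

lemma pdy_sq_inr (hp : IsMinkowskianProduct U₁ U₂ F₁ F₂ f F) (hx₁ : x ∘ Sum.inl ∈ U₁)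
    (hx₂ : x ∘ Sum.inr ∈ U₂) (hy₁ : y ∘ Sum.inl ≠ 0) (hy₂ : y ∘ Sum.inr ≠ 0) (b : Fin n) :
    pdy (fun x y => F x y ^ 2) (Sum.inr b) x y =
      pderivT f (F₁ (x ∘ Sum.inl) (y ∘ Sum.inl) ^ 2) (F₂ (x ∘ Sum.inr) (y ∘ Sum.inr) ^ 2) *
        pdy (fun x y => F₂ x y ^ 2) b (x ∘ Sum.inr) (y ∘ Sum.inr) := by
  simpa [dirDerivY_single] using hp.dirDerivY_sq hx₁ hx₂ hy₁ hy₂ (Pi.single (Sum.inr b) 1)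

lemma dirDerivY_pdy_sq_inl_eq_sprayRhs (hp : IsMinkowskianProduct U₁ U₂ F₁ F₂ f F)
    (hx₁ : x ∘ Sum.inl ∈ U₁) (hx₂ : x ∘ Sum.inr ∈ U₂) (hy₁ : y ∘ Sum.inl ≠ 0)
    (hy₂ : y ∘ Sum.inr ≠ 0) (b : Fin m) :
    dirDerivY (pdy (fun x y => F x y ^ 2) (Sum.inl b))
      (Sum.elim (fun c => 2 * spray F₁ c (x ∘ Sum.inl) (y ∘ Sum.inl))
        (fun c => 2 * spray F₂ c (x ∘ Sum.inr) (y ∘ Sum.inr))) x y =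
      sprayRhs F (Sum.inl b) x y := by
  have hK := hp.finsler₁.jointlySmoothAt_sq hx₁ hy₁
  have hH := hp.finsler₂.jointlySmoothAt_sq hx₂ hy₂
  have hfs := (contDiffAt_pderivS (hp.contDiffAt_f hx₁ hy₁ hx₂ hy₂)).differentiableAt (by simp)
  have hloc : Function.uncurry (pdy (fun x y => F x y ^ 2) (Sum.inl b)) =ᶠ[𝓝 (x, y)]
      Function.uncurry fun x y =>
        pderivS f (F₁ (x ∘ Sum.inl) (y ∘ Sum.inl) ^ 2) (F₂ (x ∘ Sum.inr) (y ∘ Sum.inr) ^ 2) *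
          pdy (fun x y => F₁ x y ^ 2) b (x ∘ Sum.inl) (y ∘ Sum.inl) := by
    filter_upwards [hp.eventually_mem_and_ne_zero hx₁ hx₂ hy₁ hy₂] with p ⟨h₁, h₂, h₃, h₄⟩
    exact hp.pdy_sq_inl h₁ h₂ h₃ h₄ b
  have hGx : pdx (fun x y => F x y ^ 2) (Sum.inl b) x y =
      pderivS f (F₁ (x ∘ Sum.inl) (y ∘ Sum.inl) ^ 2) (F₂ (x ∘ Sum.inr) (y ∘ Sum.inr) ^ 2) *
        pdx (fun x y => F₁ x y ^ 2) b (x ∘ Sum.inl) (y ∘ Sum.inl) := by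
    simpa [dirDerivX_single] using hp.dirDerivX_sq hx₁ hx₂ hy₁ hy₂ (Pi.single (Sum.inl b) 1)
  rw [sprayRhs, dirDerivY_congr hloc, dirDerivX_congr hloc, hGx,
    dirDerivY_comp₂_pullback_mul (C := pdy (fun x y => F₁ x y ^ 2) b) hfs hK hH (hK.dirDerivY _),
    dirDerivX_comp₂_pullback_mul (C := pdy (fun x y => F₁ x y ^ 2) b) hfs hK hH (hK.dirDerivY _)]
  simp only [Sum.elim_comp_inl, Sum.elim_comp_inr]
  rw [hp.finsler₁.dirDerivY_sq_two_mul_spray hx₁ hy₁,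
    hp.finsler₂.dirDerivY_sq_two_mul_spray hx₂ hy₂,
    (hp.finsler₁.dirDerivY_pdy_sq_eq_sprayRhs_iff hx₁ hy₁ _).2 rfl b, sprayRhs]
  ring

lemma dirDerivY_pdy_sq_inr_eq_sprayRhs (hp : IsMinkowskianProduct U₁ U₂ F₁ F₂ f F)
    (hx₁ : x ∘ Sum.inl ∈ U₁) (hx₂ : x ∘ Sum.inr ∈ U₂) (hy₁ : y ∘ Sum.inl ≠ 0)
    (hy₂ : y ∘ Sum.inr ≠ 0) (b : Fin n) :
    dirDerivY (pdy (fun x y => F x y ^ 2) (Sum.inr b))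
      (Sum.elim (fun c => 2 * spray F₁ c (x ∘ Sum.inl) (y ∘ Sum.inl))
        (fun c => 2 * spray F₂ c (x ∘ Sum.inr) (y ∘ Sum.inr))) x y =
      sprayRhs F (Sum.inr b) x y := by
  have hK := hp.finsler₁.jointlySmoothAt_sq hx₁ hy₁
  have hH := hp.finsler₂.jointlySmoothAt_sq hx₂ hy₂
  have hft := (contDiffAt_pderivT (hp.contDiffAt_f hx₁ hy₁ hx₂ hy₂)).differentiableAt (by simp)
  have hloc : Function.uncurry (pdy (fun x y => F x y ^ 2) (Sum.inr b)) =ᶠ[𝓝 (x, y)]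
      Function.uncurry fun x y =>
        pderivT f (F₁ (x ∘ Sum.inl) (y ∘ Sum.inl) ^ 2) (F₂ (x ∘ Sum.inr) (y ∘ Sum.inr) ^ 2) *
          pdy (fun x y => F₂ x y ^ 2) b (x ∘ Sum.inr) (y ∘ Sum.inr) := by
    filter_upwards [hp.eventually_mem_and_ne_zero hx₁ hx₂ hy₁ hy₂] with p ⟨h₁, h₂, h₃, h₄⟩
    exact hp.pdy_sq_inr h₁ h₂ h₃ h₄ b
  have hGx : pdx (fun x y => F x y ^ 2) (Sum.inr b) x y =
      pderivT f (F₁ (x ∘ Sum.inl) (y ∘ Sum.inl) ^ 2) (F₂ (x ∘ Sum.inr) (y ∘ Sum.inr) ^ 2) *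
        pdx (fun x y => F₂ x y ^ 2) b (x ∘ Sum.inr) (y ∘ Sum.inr) := by
    simpa [dirDerivX_single] using hp.dirDerivX_sq hx₁ hx₂ hy₁ hy₂ (Pi.single (Sum.inr b) 1)
  rw [sprayRhs, dirDerivY_congr hloc, dirDerivX_congr hloc, hGx,
    dirDerivY_comp₂_pullback_mul (C := pdy (fun x y => F₂ x y ^ 2) b) hft hK hH (hH.dirDerivY _),
    dirDerivX_comp₂_pullback_mul (C := pdy (fun x y => F₂ x y ^ 2) b) hft hK hH (hH.dirDerivY _)]
  simp only [Sum.elim_comp_inl, Sum.elim_comp_inr]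
  rw [hp.finsler₁.dirDerivY_sq_two_mul_spray hx₁ hy₁,
    hp.finsler₂.dirDerivY_sq_two_mul_spray hx₂ hy₂,
    (hp.finsler₂.dirDerivY_pdy_sq_eq_sprayRhs_iff hx₂ hy₂ _).2 rfl b, sprayRhs]
  ring

lemma two_mul_spray_eq_sumElim (hp : IsMinkowskianProduct U₁ U₂ F₁ F₂ f F)
    (hx₁ : x ∘ Sum.inl ∈ U₁) (hx₂ : x ∘ Sum.inr ∈ U₂) (hy₁ : y ∘ Sum.inl ≠ 0)
    (hy₂ : y ∘ Sum.inr ≠ 0) :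
    (fun α => 2 * spray F α x y) = Sum.elim (fun c => 2 * spray F₁ c (x ∘ Sum.inl) (y ∘ Sum.inl))
      (fun c => 2 * spray F₂ c (x ∘ Sum.inr) (y ∘ Sum.inr)) := by
  have hy : y ≠ 0 := by
    rintro rfl
    exact hy₁ rfl
  refine ((hp.finsler.dirDerivY_pdy_sq_eq_sprayRhs_iff ⟨hx₁, hx₂⟩ hy _).1
    (Sum.forall.2 ⟨?_, ?_⟩)).symm
  · exact hp.dirDerivY_pdy_sq_inl_eq_sprayRhs hx₁ hx₂ hy₁ hy₂
  · exact hp.dirDerivY_pdy_sq_inr_eq_sprayRhs hx₁ hx₂ hy₁ hy₂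

lemma berwaldCurv_inl (hp : IsMinkowskianProduct U₁ U₂ F₁ F₂ f F) (hx₁ : x ∘ Sum.inl ∈ U₁)
    (hx₂ : x ∘ Sum.inr ∈ U₂) (hy₁ : y ∘ Sum.inl ≠ 0) (hy₂ : y ∘ Sum.inr ≠ 0) (a : Fin m)
    (β γ η : Fin m ⊕ Fin n) :
    berwaldCurv F (Sum.inl a) β γ η x y = dirDerivY (dirDerivY (dirDerivY (spray F₁ a)
      (Pi.single η 1 ∘ Sum.inl)) (Pi.single γ 1 ∘ Sum.inl)) (Pi.single β 1 ∘ Sum.inl)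
        (x ∘ Sum.inl) (y ∘ Sum.inl) := by
  refine berwaldCurv_eq_of_eventually_pullback ?_ ?_ β γ η
  · filter_upwards [hp.eventually_mem_and_ne_zero hx₁ hx₂ hy₁ hy₂] with p ⟨h₁, h₂, h₃, h₄⟩
    exact mul_left_cancel₀ two_ne_zero
      (congrFun (hp.two_mul_spray_eq_sumElim h₁ h₂ h₃ h₄) (Sum.inl a))
  · filter_upwards [hp.finsler₁.eventually_mem_slit hx₁ hy₁] with q ⟨hq, hq'⟩
    exact hp.finsler₁.jointlySmoothAt_spray hq hq' a

lemma berwaldCurv_inr (hp : IsMinkowskianProduct U₁ U₂ F₁ F₂ f F) (hx₁ : x ∘ Sum.inl ∈ U₁)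
    (hx₂ : x ∘ Sum.inr ∈ U₂) (hy₁ : y ∘ Sum.inl ≠ 0) (hy₂ : y ∘ Sum.inr ≠ 0) (a : Fin n)
    (β γ η : Fin m ⊕ Fin n) :
    berwaldCurv F (Sum.inr a) β γ η x y = dirDerivY (dirDerivY (dirDerivY (spray F₂ a)
      (Pi.single η 1 ∘ Sum.inr)) (Pi.single γ 1 ∘ Sum.inr)) (Pi.single β 1 ∘ Sum.inr)
        (x ∘ Sum.inr) (y ∘ Sum.inr) := by
  refine berwaldCurv_eq_of_eventually_pullback ?_ ?_ β γ η
  · filter_upwards [hp.eventually_mem_and_ne_zero hx₁ hx₂ hy₁ hy₂] with p ⟨h₁, h₂, h₃, h₄⟩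
    exact mul_left_cancel₀ two_ne_zero
      (congrFun (hp.two_mul_spray_eq_sumElim h₁ h₂ h₃ h₄) (Sum.inr a))
  · filter_upwards [hp.finsler₂.eventually_mem_slit hx₂ hy₂] with q ⟨hq, hq'⟩
    exact hp.finsler₂.jointlySmoothAt_spray hq hq' a

end IsMinkowskianProduct

/-- The mean Berwald curvature of a Minkowskian product Finsler metric splits:
`E_{ij} = E₁_{ij}`, `E_{i'j'} = E₂_{i'j'}`, and the mixed components vanish. -/
theorem meanBerwaldCurv_of_minkowskian_product {m n : ℕ}
    (U₁ : Set (Fin m → ℝ)) (U₂ : Set (Fin n → ℝ))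
    (F₁ : (Fin m → ℝ) → (Fin m → ℝ) → ℝ) (F₂ : (Fin n → ℝ) → (Fin n → ℝ) → ℝ)
    (f : ℝ → ℝ → ℝ) (F : (Fin m ⊕ Fin n → ℝ) → (Fin m ⊕ Fin n → ℝ) → ℝ)
    (hprod : IsMinkowskianProduct U₁ U₂ F₁ F₂ f F) :
    ∀ x : Fin m ⊕ Fin n → ℝ, (x ∘ Sum.inl) ∈ U₁ → (x ∘ Sum.inr) ∈ U₂ →
    ∀ y : Fin m ⊕ Fin n → ℝ, (y ∘ Sum.inl) ≠ 0 → (y ∘ Sum.inr) ≠ 0 →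
      (∀ i j : Fin m,
        meanBerwaldCurv F (Sum.inl i) (Sum.inl j) x y =
          meanBerwaldCurv F₁ i j (x ∘ Sum.inl) (y ∘ Sum.inl)) ∧
      (∀ i' j' : Fin n,
        meanBerwaldCurv F (Sum.inr i') (Sum.inr j') x y =
          meanBerwaldCurv F₂ i' j' (x ∘ Sum.inr) (y ∘ Sum.inr)) ∧
      (∀ (i' : Fin n) (j : Fin m),
        meanBerwaldCurv F (Sum.inr i') (Sum.inl j) x y = 0) ∧
      (∀ (i : Fin m) (j' : Fin n),
        meanBerwaldCurv F (Sum.inl i) (Sum.inr j') x y = 0) := by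
  intro x hx₁ hx₂ y hy₁ hy₂
  have hB₁ := hprod.berwaldCurv_inl hx₁ hx₂ hy₁ hy₂
  have hB₂ := hprod.berwaldCurv_inr hx₁ hx₂ hy₁ hy₂
  refine ⟨fun i j => ?_, fun i j => ?_, fun i j => ?_, fun i j => ?_⟩ <;>
    simp only [meanBerwaldCurv, Fintype.sum_sum_type, hB₁, hB₂, Pi.single_inl_comp_inl,
      Pi.single_inr_comp_inr, Pi.single_inl_comp_inr, Pi.single_inr_comp_inl, dirDerivY_zero,
      dirDerivY_fun_zero, Finset.sum_const_zero, add_zero, zero_add, mul_zero] <;> rfl
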